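/- Well-definedness of the Inverse-option implied volatility for short maturities: there exist ε > 0 and c > 0 such that for all τ > 0, x ∈ ℝ and σ > 0 with σ√τ ≤ ε, one has ∂_σ BS(τ,x,x,σ) ≥ c √τ; consequently, for each such τ the map σ ↦ BS(τ,x,x,σ) is strictly increasing (hence injective) on the interval (0, ε/√τ]. -/

import Mathlib

open Real MeasureTheory Set Filter

/-- Standard normal CDF `N(z) = (2π)^{-1/2} ∫_{-∞}^z e^{-t²/2} dt`. -/
noncomputable def Ncdf (z : ℝ) : ℝ :=
  (Real.sqrt (2 * Real.pi))⁻¹ * ∫ t in Set.Iic z, Real.exp (-t ^ 2 / 2)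

/-- Standard normal density `φ(z) = (2π)^{-1/2} e^{-z²/2}`. -/
noncomputable def phi (z : ℝ) : ℝ :=
  (Real.sqrt (2 * Real.pi))⁻¹ * Real.exp (-z ^ 2 / 2)

/-- `d₂ = (x-k)/(σ√τ) - σ√τ/2`. -/
noncomputable def d2 (τ x k σ : ℝ) : ℝ :=
  (x - k) / (σ * Real.sqrt τ) - σ * Real.sqrt τ / 2

/-- `d₁ = d₂ - σ√τ`. -/
noncomputable def d1 (τ x k σ : ℝ) : ℝ :=
  d2 τ x k σ - σ * Real.sqrt τ

/-- Black–Scholes price of an Inverse European call: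
`BS(τ,x,k,σ) = N(d₂) - e^{σ²τ + k - x} N(d₁)`. -/
noncomputable def BS (τ x k σ : ℝ) : ℝ :=
  Ncdf (d2 τ x k σ) - Real.exp (σ ^ 2 * τ + k - x) * Ncdf (d1 τ x k σ)

/-- Complementary error function `Erfc(z) = (2/√π) ∫_z^∞ e^{-t²} dt`. -/
noncomputable def Erfc (z : ℝ) : ℝ :=
  2 / Real.sqrt Real.pi * ∫ t in Set.Ioi z, Real.exp (-t ^ 2)

/-- `H(τ,x,k,σ) = ½ (∂³ₓₓₓ BS - ∂²ₓₓ BS)(τ,x,k,σ)`. -/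
noncomputable def Hfun (τ x k σ : ℝ) : ℝ :=
  (1 / 2) * (iteratedDeriv 3 (fun x' => BS τ x' k σ) x
    - iteratedDeriv 2 (fun x' => BS τ x' k σ) x)

/-- `G(τ,x,k,σ) = ∂ₖ H(τ,x,k,σ) - H(τ,x,k,σ)`. -/
noncomputable def Gfun (τ x k σ : ℝ) : ℝ :=
  deriv (fun k' => Hfun τ x k' σ) k - Hfun τ x k σ

lemma gauss_integrable : MeasureTheory.Integrable (fun t : ℝ => Real.exp (-t ^ 2 / 2)) := by
  have := integrable_exp_neg_mul_sq (b := (1/2 : ℝ)) (by norm_num)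
  convert this using 2 with t
  ring_nf

lemma Ncdf_eq (z : ℝ) : Ncdf z = (Real.sqrt (2 * Real.pi))⁻¹ *
    ((∫ t in Set.Iic (0:ℝ), Real.exp (-t ^ 2 / 2)) + ∫ t in (0:ℝ)..z, Real.exp (-t ^ 2 / 2)) := by
  rw [Ncdf, ← intervalIntegral.integral_Iic_sub_Iic gauss_integrable.integrableOn gauss_integrable.integrableOn]
  ring

lemma hasDerivAt_Ncdf (z : ℝ) : HasDerivAt Ncdf (phi z) z := by
  have h1 : HasDerivAt (fun u => ∫ t in (0:ℝ)..u, Real.exp (-t ^ 2 / 2))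
      (Real.exp (-z ^ 2 / 2)) z := by
    apply intervalIntegral.integral_hasDerivAt_right
      (gauss_integrable.intervalIntegrable)
      gauss_integrable.1.stronglyMeasurableAtFilter
    exact (Real.continuous_exp.comp (by continuity)).continuousAt
  have h2 := ((h1.const_add (∫ t in Set.Iic (0:ℝ), Real.exp (-t ^ 2 / 2))).const_mul
      (Real.sqrt (2 * Real.pi))⁻¹)
  refine HasDerivAt.congr_deriv (h2.congr_of_eventuallyEq ?_) ?_
  · filter_upwards with u; rw [Ncdf_eq]
  · rw [phi]

lemma phi_neg (z : ℝ) : phi (-z) = phi z := by simp [phi]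

lemma phi_pos (z : ℝ) : 0 < phi z := by
  apply mul_pos (inv_pos.2 (Real.sqrt_pos.2 (by positivity))) (Real.exp_pos _)


lemma continuous_Ncdf : Continuous Ncdf := by
  have : Differentiable ℝ Ncdf := fun z => (hasDerivAt_Ncdf z).differentiableAt
  exact this.continuous

lemma continuous_phi : Continuous phi := by
  unfold phi; fun_prop

noncomputable def F (s : ℝ) : ℝ :=
  -(1/2) * phi (s/2) - 2 * s * Real.exp (s^2) * Ncdf (-(3*s)/2)
    + (3/2) * Real.exp (s^2) * phi (3*s/2)

lemma continuous_F : Continuous F := by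
  unfold F
  exact ((continuous_const.mul (continuous_phi.comp (by fun_prop))).sub
      (((continuous_const.mul continuous_id).mul (Real.continuous_exp.comp (by fun_prop))).mul
        (continuous_Ncdf.comp (by fun_prop)))).add
    ((continuous_const.mul (Real.continuous_exp.comp (by fun_prop))).mul
      (continuous_phi.comp (by fun_prop)))

lemma F_zero : F 0 = phi 0 := by
  simp [F]; ring

lemma BS_atm (τ x σ : ℝ) :
    BS τ x x σ = Ncdf (-(σ * Real.sqrt τ) / 2)
      - Real.exp (σ ^ 2 * τ) * Ncdf (-(3 * (σ * Real.sqrt τ)) / 2) := by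
  have h2 : d2 τ x x σ = -(σ * Real.sqrt τ) / 2 := by
    simp [d2]; ring
  have h1 : d1 τ x x σ = -(3 * (σ * Real.sqrt τ)) / 2 := by
    rw [d1, h2]; ring
  rw [BS, h1, h2]
  ring_nf

lemma hasDerivAt_BS_atm (τ : ℝ) (hτ : 0 < τ) (x σ : ℝ) :
    HasDerivAt (fun σ' => BS τ x x σ')
      (Real.sqrt τ * F (σ * Real.sqrt τ)) σ := by
  set r := Real.sqrt τ with hr
  have hr2 : r ^ 2 = τ := Real.sq_sqrt hτ.le
  have hA0 : HasDerivAt (fun σ' : ℝ => -(σ' * r) / 2) (-r / 2) σ := by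
    have h : (fun σ' : ℝ => -(σ' * r) / 2) = fun σ' => (-r / 2) * σ' + 0 := by
      funext u; ring
    rw [h]
    simpa using ((hasDerivAt_id σ).const_mul (-r / 2)).add_const 0
  have hA : HasDerivAt (fun σ' : ℝ => Ncdf (-(σ' * r) / 2))
      (phi (-(σ * r) / 2) * (-r / 2)) σ := (hasDerivAt_Ncdf _).comp σ hA0
  have hB0 : HasDerivAt (fun σ' : ℝ => σ' ^ 2 * τ) (2 * σ * τ) σ := by
    have h := (hasDerivAt_pow 2 σ).mul_const τ
    norm_num at h
    exact h
  have hB : HasDerivAt (fun σ' : ℝ => Real.exp (σ' ^ 2 * τ))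
      (Real.exp (σ ^ 2 * τ) * (2 * σ * τ)) σ := hB0.exp
  have hC0 : HasDerivAt (fun σ' : ℝ => -(3 * (σ' * r)) / 2) (-(3 * r) / 2) σ := by
    have h : (fun σ' : ℝ => -(3 * (σ' * r)) / 2) = fun σ' => (-(3 * r) / 2) * σ' + 0 := by
      funext u; ring
    rw [h]
    simpa using ((hasDerivAt_id σ).const_mul (-(3 * r) / 2)).add_const 0
  have hC : HasDerivAt (fun σ' : ℝ => Ncdf (-(3 * (σ' * r)) / 2))
      (phi (-(3 * (σ * r)) / 2) * (-(3 * r) / 2)) σ := (hasDerivAt_Ncdf _).comp σ hC0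
  have hall := hA.sub (hB.mul hC)
  have heq : (fun σ' => BS τ x x σ') =
      fun σ' => Ncdf (-(σ' * r) / 2) - Real.exp (σ' ^ 2 * τ) * Ncdf (-(3 * (σ' * r)) / 2) := by
    funext u; rw [BS_atm]
  rw [heq]
  refine hall.congr_deriv ?_
  symm
  rw [F, show ((σ * r) ^ 2 : ℝ) = σ ^ 2 * τ from by rw [mul_pow, hr2],
    show (-(σ * r) / 2 : ℝ) = -((σ * r) / 2) from by ring, phi_neg,
    show (-(3 * (σ * r)) / 2 : ℝ) = -((3 * (σ * r)) / 2) from by ring, phi_neg, ← hr2]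
  ring

/-- well-definedness of the Inverse-option implied volatility for
short maturities. -/
theorem stmt_13 :
    ∃ ε > 0, ∃ c > 0,
      (∀ τ : ℝ, 0 < τ → ∀ x : ℝ, ∀ σ : ℝ, 0 < σ → σ * Real.sqrt τ ≤ ε →
        c * Real.sqrt τ ≤ deriv (fun σ' => BS τ x x σ') σ) ∧
      (∀ τ : ℝ, 0 < τ → ∀ x : ℝ,
        StrictMonoOn (fun σ => BS τ x x σ) (Set.Ioc 0 (ε / Real.sqrt τ))) := by
  have hF0 : F 0 = phi 0 := F_zero
  have hphi : 0 < phi 0 := phi_pos 0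
  have hev : ∀ᶠ s in nhds (0 : ℝ), phi 0 / 2 < F s := by
    have h := continuous_F.continuousAt (x := (0 : ℝ))
    filter_upwards [h (Ioi_mem_nhds (show phi 0 / 2 < F 0 by rw [hF0]; linarith))] with s hs
    exact hs
  obtain ⟨δ, hδ, hball⟩ := Metric.eventually_nhds_iff.mp hev
  refine ⟨δ / 2, by linarith, phi 0 / 2, by linarith, ?_, ?_⟩
  · intro τ hτ x σ hσ hσε
    have hrt : 0 < Real.sqrt τ := Real.sqrt_pos.2 hτ
    have hs : dist (σ * Real.sqrt τ) 0 < δ := by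
      rw [Real.dist_eq, sub_zero, abs_of_pos (mul_pos hσ hrt)]
      linarith
    have hFs := hball hs
    rw [(hasDerivAt_BS_atm τ hτ x σ).deriv]
    nlinarith
  · intro τ hτ x
    have hrt : 0 < Real.sqrt τ := Real.sqrt_pos.2 hτ
    apply strictMonoOn_of_deriv_pos (convex_Ioc _ _)
    · exact (Differentiable.continuous
        (fun σ => (hasDerivAt_BS_atm τ hτ x σ).differentiableAt)).continuousOn
    · intro σ hσ
      rw [interior_Ioc] at hσ
      have hσ0 : 0 < σ := hσ.1
      have hσε : σ * Real.sqrt τ < δ / 2 := by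
        have := hσ.2
        calc σ * Real.sqrt τ < (δ / 2 / Real.sqrt τ) * Real.sqrt τ := by
              exact mul_lt_mul_of_pos_right this hrt
          _ = δ / 2 := by field_simp
      have hs : dist (σ * Real.sqrt τ) 0 < δ := by
        rw [Real.dist_eq, sub_zero, abs_of_pos (mul_pos hσ0 hrt)]
        linarith
      have hFs := hball hs
      rw [(hasDerivAt_BS_atm τ hτ x σ).deriv]
      nlinarith
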